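/- Let f : ℝ^2 → ℂ be a function and T_1, T_2 > 0 be such that: for every a_2 ∈ ℝ the function x_1 ↦ f(x_1, a_2) is a T_1-periodic trigonometric polynomial, and for every a_1 ∈ ℝ the function x_2 ↦ f(a_1, x_2) is a T_2-periodic trigonometric polynomial. Then there exist a finite set F ⊂ ℤ^2 and coefficients c_α ∈ ℂ (α ∈ F) such that f(x_1, x_2) = Σ_{(α_1, α_2) ∈ F} c_{(α_1, α_2)} · exp(2πi(α_1 x_1/T_1 + α_2 x_2/T_2)) for all (x_1, x_2) ∈ ℝ^2. No continuity of f is assumed, and no common bound on the degrees of the one-variable sections is assumed. -/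

import Mathlib

/-!
For all `a` in an uncountable set `A`, the horizontal sections `f (·, a)` lie in one
finite-dimensional space `W` of `T₁`-trigonometric polynomials. Interpolation in `W` gives
nodes `tⱼ` and `cⱼ ∈ W` with `f (x, a) = ∑ⱼ cⱼ x * f (tⱼ, a)` for `a ∈ A`. For fixed `x`,
both sides are `T₂`-trigonometric polynomials in `a`, hence real-analytic, so agreeing on the
uncountable set `A` they agree everywhere. Thus `f (x, y) = ∑ⱼ cⱼ x * f (tⱼ, y)` is a finite
sum of products of one-variable trigonometric polynomials.
-/

open Complex Set Submodule Filter

section Span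

variable {R X ι : Type*} [Semiring R]

theorem Submodule.mem_span_image_of_forall_eq_sum {v : ι → X → R} {g : X → R} (S : Finset ι)
    (b : ι → R) (hg : ∀ x, g x = ∑ i ∈ S, b i * v i x) : g ∈ span R (v '' S) := by
  have : g = ∑ i ∈ S, b i • v i := funext fun x => by simp [hg]
  rw [this]
  exact sum_mem fun i hi => smul_mem _ _ (subset_span (mem_image_of_mem v hi))

theorem Submodule.mem_span_range_iff_exists_forall_eq_sum {v : ι → X → R} {g : X → R} :
    g ∈ span R (range v) ↔ ∃ (S : Finset ι) (b : ι → R), ∀ x, g x = ∑ i ∈ S, b i * v i x := by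
  constructor
  · intro hg
    obtain ⟨b, rfl⟩ := Finsupp.mem_span_range_iff_exists_finsupp.1 hg
    exact ⟨b.support, b, fun x => by simp [Finsupp.sum]⟩
  · rintro ⟨S, b, hg⟩
    exact span_mono (image_subset_range _ _) (mem_span_image_of_forall_eq_sum S b hg)

end Span

theorem Submodule.mul_mem_span_range_mul {R X Y ι κ : Type*} [CommSemiring R]
    {v : ι → X → R} {w : κ → Y → R} {g : X → R} {h : Y → R}
    (hg : g ∈ span R (range v)) (hh : h ∈ span R (range w)) :
    (fun p : X × Y => g p.1 * h p.2) ∈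
      span R (range fun ik : ι × κ => fun p : X × Y => v ik.1 p.1 * w ik.2 p.2) := by
  let B : (X → R) →ₗ[R] (Y → R) →ₗ[R] X × Y → R :=
    LinearMap.mk₂ R (fun g h p => g p.1 * h p.2) (fun _ _ _ => by ext; simp [add_mul])
      (fun _ _ _ => by ext; simp [mul_assoc]) (fun _ _ _ => by ext; simp [mul_add])
      (fun _ _ _ => by ext; simp [mul_left_comm])
  have hB := apply_mem_map₂ B hg hh
  rw [map₂_span_span] at hB
  refine span_mono ?_ hB
  rintro _ ⟨_, ⟨i, rfl⟩, _, ⟨k, rfl⟩, rfl⟩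
  exact ⟨(i, k), rfl⟩

section Interpolation

variable {K X : Type*} [Field K] (W : Submodule K (X → K)) [FiniteDimensional K W]

/-- Finitely many point evaluations already span the span of all point evaluations in the
finite-dimensional dual of `W`. -/
theorem Submodule.exists_fin_eq_zero_of_forall_apply_eq_zero :
    ∃ (n : ℕ) (t : Fin n → X), ∀ g ∈ W, (∀ j, g (t j) = 0) → g = 0 := by
  let ev : X → Module.Dual K W := fun x => (LinearMap.proj x).comp W.subtype
  obtain ⟨φ, hφ, hspan, -⟩ := exists_fun_fin_finrank_span_eq K (range ev)
  choose t ht using hφ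
  refine ⟨_, t, fun g hg hgt => funext fun x => ?_⟩
  have hle : span K (range ev) ≤ LinearMap.ker (Module.Dual.eval K W ⟨g, hg⟩) := by
    rw [← hspan, span_le]
    rintro _ ⟨j, rfl⟩
    simpa [← ht j, ev] using hgt j
  simpa [ev] using hle (subset_span (mem_range_self x))

theorem Submodule.exists_fin_forall_eq_sum_apply_smul :
    ∃ (n : ℕ) (t : Fin n → X) (c : Fin n → X → K),
      (∀ j, c j ∈ W) ∧ ∀ g ∈ W, g = ∑ j, g (t j) • c j := by
  obtain ⟨n, t, ht⟩ := W.exists_fin_eq_zero_of_forall_apply_eq_zero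
  let E : W →ₗ[K] Fin n → K := LinearMap.pi fun j => (LinearMap.proj (t j)).comp W.subtype
  have hE : LinearMap.ker E = ⊥ :=
    eq_bot_iff.2 fun g hg => (mem_bot K).2 (Subtype.ext (ht g g.2 fun j => congrFun hg j))
  obtain ⟨L, hL⟩ := E.exists_leftInverse_of_injective hE
  refine ⟨n, t, fun j => L (Pi.single j 1), fun j => (L _).2, fun g hg => ?_⟩
  have hEg : E ⟨g, hg⟩ = ∑ j, g (t j) • Pi.single j 1 := pi_eq_sum_univ' _
  calc g = (L (E ⟨g, hg⟩) : X → K) := by rw [← LinearMap.comp_apply, hL]; rfl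
    _ = ∑ j, g (t j) • (L (Pi.single j 1) : X → K) := by rw [hEg, map_sum]; simp [map_smul]

end Interpolation

theorem exists_not_countable_preimage_singleton {α β : Type*} [Uncountable α] [Countable β]
    (f : α → β) : ∃ b, ¬(f ⁻¹' {b}).Countable := by
  by_contra! h
  refine not_countable_univ (α := α) ?_
  rw [← preimage_univ (f := f), ← iUnion_of_singleton β, preimage_iUnion]
  exact countable_iUnion h

theorem exists_accPt_of_not_countable {X : Type*} [TopologicalSpace X] [SigmaCompactSpace X]
    {A : Set X} (hA : ¬A.Countable) : ∃ x, AccPt x (𝓟 A) := by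
  contrapose! hA
  have hfin (n : ℕ) : (A ∩ compactCovering X n).Finite := by
    by_contra hinf
    obtain ⟨x, -, hx⟩ := Set.Infinite.exists_accPt_of_subset_isCompact hinf
      (isCompact_compactCovering X n) inter_subset_right
    exact hA x (hx.mono (principal_mono.2 inter_subset_left))
  rw [← inter_univ A, ← iUnion_compactCovering, inter_iUnion]
  exact countable_iUnion fun n => (hfin n).countable

theorem AnalyticOnNhd.eq_zero_of_eqOn_zero_of_not_countable {𝕜 E : Type*}
    [NontriviallyNormedField 𝕜] [SigmaCompactSpace 𝕜] [PreconnectedSpace 𝕜]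
    [NormedAddCommGroup E] [NormedSpace 𝕜 E] {g : 𝕜 → E} (hg : AnalyticOnNhd 𝕜 g univ)
    {A : Set 𝕜} (hA : ¬A.Countable) (hgA : EqOn g 0 A) : g = 0 := by
  obtain ⟨x, hx⟩ := exists_accPt_of_not_countable hA
  exact funext fun y => hg.eqOn_zero_of_preconnected_of_frequently_eq_zero isPreconnected_univ
    (mem_univ x) ((accPt_iff_frequently_nhdsNE.1 hx).mono hgA) (mem_univ y)

noncomputable def trigMonomial (T : ℝ) (m : ℤ) (t : ℝ) : ℂ :=
  exp (2 * Real.pi * I * (m : ℂ) * (t : ℂ) / (T : ℂ))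

noncomputable def trigPoly (T : ℝ) : Submodule ℂ (ℝ → ℂ) :=
  span ℂ (range (trigMonomial T))

noncomputable def trigPoly₂ (T₁ T₂ : ℝ) : Submodule ℂ (ℝ × ℝ → ℂ) :=
  span ℂ (range fun α : ℤ × ℤ => fun x : ℝ × ℝ =>
    trigMonomial T₁ α.1 x.1 * trigMonomial T₂ α.2 x.2)

theorem analyticOnNhd_trigMonomial (T : ℝ) (m : ℤ) :
    AnalyticOnNhd ℝ (trigMonomial T m) univ := by
  intro x _
  have hexp : AnalyticAt ℂ (fun z : ℂ => exp (2 * Real.pi * I * m * z / T)) x := by fun_prop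
  exact hexp.restrictScalars.comp (ofRealCLM.analyticAt x)

theorem analyticOnNhd_of_mem_trigPoly {T : ℝ} {g : ℝ → ℂ} (hg : g ∈ trigPoly T) :
    AnalyticOnNhd ℝ g univ := by
  induction hg using span_induction with
  | mem _ h => obtain ⟨m, rfl⟩ := h; exact analyticOnNhd_trigMonomial T m
  | zero => exact analyticOnNhd_const
  | add _ _ _ _ hg hh => exact hg.add hh
  | smul c _ _ hg => exact analyticOnNhd_const.mul hg

theorem stmt_16_general (f : ℝ × ℝ → ℂ) (T₁ T₂ : ℝ)
    (hsec₁ : ∀ a₂ : ℝ, ∃ (S : Finset ℤ) (b : ℤ → ℂ), ∀ t : ℝ,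
      f (t, a₂) = ∑ m ∈ S, b m * Complex.exp (2 * Real.pi * Complex.I * (m : ℂ) * (t : ℂ) / (T₁ : ℂ)))
    (hsec₂ : ∀ a₁ : ℝ, ∃ (S : Finset ℤ) (b : ℤ → ℂ), ∀ t : ℝ,
      f (a₁, t) = ∑ m ∈ S, b m * Complex.exp (2 * Real.pi * Complex.I * (m : ℂ) * (t : ℂ) / (T₂ : ℂ))) :
    ∃ (F : Finset (ℤ × ℤ)) (c : ℤ × ℤ → ℂ), ∀ x₁ x₂ : ℝ,
      f (x₁, x₂) = ∑ α ∈ F, c α *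
        Complex.exp (2 * Real.pi * Complex.I *
          ((α.1 : ℂ) * (x₁ : ℂ) / (T₁ : ℂ) + (α.2 : ℂ) * (x₂ : ℂ) / (T₂ : ℂ))) := by
  choose S b hb using hsec₁
  have hcol (x : ℝ) : (fun y => f (x, y)) ∈ trigPoly T₂ :=
    mem_span_range_iff_exists_forall_eq_sum.2 (hsec₂ x)
  obtain ⟨S₀, hS₀⟩ := exists_not_countable_preimage_singleton S
  let W := span ℂ (trigMonomial T₁ '' S₀)
  have : FiniteDimensional ℂ W := .span_of_finite ℂ (S₀.finite_toSet.image _)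
  obtain ⟨n, t, c, hcW, hc⟩ := W.exists_fin_forall_eq_sum_apply_smul
  have hrow (a : ℝ) (ha : S a = S₀) (x : ℝ) : f (x, a) = ∑ j, f (t j, a) * c j x := by
    have hW : (fun s => f (s, a)) ∈ W := mem_span_image_of_forall_eq_sum _ _ (ha ▸ hb a)
    simpa using congrFun (hc _ hW) x
  have hsplit (x : ℝ) : (fun y => f (x, y)) = ∑ j, c j x • fun y => f (t j, y) := by
    rw [← sub_eq_zero]
    refine (analyticOnNhd_of_mem_trigPoly (T := T₂) ?_).eq_zero_of_eqOn_zero_of_not_countable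
      hS₀ ?_
    · exact sub_mem (hcol x) (sum_mem fun j _ => smul_mem _ _ (hcol (t j)))
    · intro a ha
      simp [hrow a ha x, mul_comm]
  have hf : f ∈ trigPoly₂ T₁ T₂ := by
    have : f = ∑ j, fun p : ℝ × ℝ => c j p.1 * f (t j, p.2) := by
      ext ⟨x, y⟩
      simpa using congrFun (hsplit x) y
    rw [this]
    exact sum_mem fun j _ => mul_mem_span_range_mul
      (span_mono (image_subset_range _ _) (hcW j)) (hcol (t j))
  obtain ⟨F, d, hd⟩ := mem_span_range_iff_exists_forall_eq_sum.1 hf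
  refine ⟨F, d, fun x₁ x₂ => (hd (x₁, x₂)).trans (Finset.sum_congr rfl fun α _ => ?_)⟩
  rw [trigMonomial, trigMonomial, ← Complex.exp_add]
  ring_nf

/-- Two-variable Prager–Schwaiger-type theorem for trigonometric polynomials: if every
horizontal section of `f : ℝ × ℝ → ℂ` is a `T₁`-periodic trigonometric polynomial and every
vertical section is a `T₂`-periodic trigonometric polynomial (with no continuity and no
common degree bound assumed), then `f` is jointly a trigonometric polynomial with periods
`T₁, T₂`. -/
theorem stmt_16 (f : ℝ × ℝ → ℂ) (T₁ T₂ : ℝ) (hT₁ : 0 < T₁) (hT₂ : 0 < T₂)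
    (hsec₁ : ∀ a₂ : ℝ, ∃ (S : Finset ℤ) (b : ℤ → ℂ), ∀ t : ℝ,
      f (t, a₂) = ∑ m ∈ S, b m * Complex.exp (2 * Real.pi * Complex.I * (m : ℂ) * (t : ℂ) / (T₁ : ℂ)))
    (hsec₂ : ∀ a₁ : ℝ, ∃ (S : Finset ℤ) (b : ℤ → ℂ), ∀ t : ℝ,
      f (a₁, t) = ∑ m ∈ S, b m * Complex.exp (2 * Real.pi * Complex.I * (m : ℂ) * (t : ℂ) / (T₂ : ℂ))) :
    ∃ (F : Finset (ℤ × ℤ)) (c : ℤ × ℤ → ℂ), ∀ x₁ x₂ : ℝ,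
      f (x₁, x₂) = ∑ α ∈ F, c α *
        Complex.exp (2 * Real.pi * Complex.I *
          ((α.1 : ℂ) * (x₁ : ℂ) / (T₁ : ℂ) + (α.2 : ℂ) * (x₂ : ℂ) / (T₂ : ℂ))) :=
  stmt_16_general f T₁ T₂ hsec₁ hsec₂
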